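/- arXiv:2105.13455 — 2 statements merged into one kernel-verified Lean document; each statement's English description precedes it below -/
import Mathlib

section
/- The function g(b) = 1 + ((1-2b)/2)·exp(-b) - (b+1)·exp(-2b) - (1/2)·exp(-3b) is monotonely increasing on [0, ∞), i.e., its derivative is nonnegative for b ≥ 0. -/
noncomputable def g (b : ℝ) : ℝ :=
  1 + ((1 - 2*b)/2) * Real.exp (-b) - (b + 1) * Real.exp (-2*b) - (1/2) * Real.exp (-3*b)

noncomputable def Hf (x : ℝ) : ℝ := (4*x-4)*Real.exp x + 4*x + 6
noncomputable def Ff (x : ℝ) : ℝ := (2*x-3)*Real.exp (2*x) + (4*x+2)*Real.exp x + 3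

lemma H_hasDeriv (x : ℝ) : HasDerivAt Hf (4*x*Real.exp x + 4) x := by
  have idd : HasDerivAt (fun y : ℝ => y) 1 x := hasDerivAt_id x
  have h1 : HasDerivAt (fun y : ℝ => (4*y-4)*Real.exp y)
      (4*1*Real.exp x + (4*x-4)*Real.exp x) x :=
    ((idd.const_mul 4).sub_const 4).mul (Real.hasDerivAt_exp x)
  have h2 : HasDerivAt (fun y : ℝ => (4*y-4)*Real.exp y + 4*y + 6)
      (4*1*Real.exp x + (4*x-4)*Real.exp x + 4*1) x :=
    (h1.add (idd.const_mul 4)).add_const 6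
  unfold Hf
  convert h2 using 1
  ring

lemma H_nonneg {b : ℝ} (hb : 0 ≤ b) : 0 ≤ Hf b := by
  have hd : Differentiable ℝ Hf := fun x => (H_hasDeriv x).differentiableAt
  have mono : MonotoneOn Hf (Set.Ici (0:ℝ)) := by
    apply monotoneOn_of_deriv_nonneg (convex_Ici 0) hd.continuous.continuousOn
      (fun x _ => (hd x).differentiableWithinAt)
    intro x hx
    rw [(H_hasDeriv x).deriv]
    have : (0:ℝ) < x := by simpa using hx
    nlinarith [Real.exp_pos x]
  have h := mono Set.self_mem_Ici hb hb
  have h0 : Hf 0 = 2 := by norm_num [Hf]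
  linarith [h0 ▸ h]

lemma F_hasDeriv (x : ℝ) : HasDerivAt Ff (Real.exp x * Hf x) x := by
  have idd : HasDerivAt (fun y : ℝ => y) 1 x := hasDerivAt_id x
  have e2 : HasDerivAt (fun y : ℝ => Real.exp (2*y)) (2*Real.exp (2*x)) x := by
    have := (Real.hasDerivAt_exp (2*x)).comp x ((hasDerivAt_id x).const_mul 2)
    simpa [Function.comp_def, mul_comm] using this
  have h1 : HasDerivAt (fun y : ℝ => (2*y-3)*Real.exp (2*y))
      (2*1*Real.exp (2*x) + (2*x-3)*(2*Real.exp (2*x))) x :=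
    ((idd.const_mul 2).sub_const 3).mul e2
  have h2 : HasDerivAt (fun y : ℝ => (4*y+2)*Real.exp y)
      (4*1*Real.exp x + (4*x+2)*Real.exp x) x :=
    ((idd.const_mul 4).add_const 2).mul (Real.hasDerivAt_exp x)
  have h3 := (h1.add h2).add_const 3
  have key : Real.exp (2*x) = Real.exp x * Real.exp x := by
    rw [← Real.exp_add]; ring_nf
  unfold Ff
  refine h3.congr_deriv ?_
  rw [Hf, key]; ring

lemma F_nonneg {b : ℝ} (hb : 0 ≤ b) : 0 ≤ Ff b := by
  have hd : Differentiable ℝ Ff := fun x => (F_hasDeriv x).differentiableAt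
  have mono : MonotoneOn Ff (Set.Ici (0:ℝ)) := by
    apply monotoneOn_of_deriv_nonneg (convex_Ici 0) hd.continuous.continuousOn
      (fun x _ => (hd x).differentiableWithinAt)
    intro x hx
    rw [(F_hasDeriv x).deriv]
    have hx' : (0:ℝ) < x := by simpa using hx
    exact mul_nonneg (Real.exp_pos x).le (H_nonneg hx'.le)
  have h := mono Set.self_mem_Ici hb hb
  have h0 : Ff 0 = 2 := by norm_num [Ff]
  linarith [h0 ▸ h]

lemma g_hasDeriv (b : ℝ) : HasDerivAt g (Real.exp (-3*b) / 2 * Ff b) b := by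
  have idd : HasDerivAt (fun y : ℝ => y) 1 b := hasDerivAt_id b
  have e1 : HasDerivAt (fun x : ℝ => Real.exp (-x)) (-Real.exp (-b)) b := by
    have := (Real.hasDerivAt_exp (-b)).comp b ((hasDerivAt_id b).neg)
    simpa [Function.comp_def] using this
  have e2 : HasDerivAt (fun x : ℝ => Real.exp (-2*x)) (-2*Real.exp (-2*b)) b := by
    have := (Real.hasDerivAt_exp (-2*b)).comp b ((hasDerivAt_id b).const_mul (-2))
    simpa [Function.comp_def, mul_comm] using this
  have e3 : HasDerivAt (fun x : ℝ => Real.exp (-3*x)) (-3*Real.exp (-3*b)) b := by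
    have := (Real.hasDerivAt_exp (-3*b)).comp b ((hasDerivAt_id b).const_mul (-3))
    simpa [Function.comp_def, mul_comm] using this
  have c1 : HasDerivAt (fun x : ℝ => (1 - 2*x)/2) ((0 - 2*1)/2) b :=
    ((hasDerivAt_const b (1:ℝ)).sub (idd.const_mul 2)).div_const 2
  have p1 := c1.mul e1
  have p2 : HasDerivAt (fun x : ℝ => (x + 1) * Real.exp (-2*x))
      (1 * Real.exp (-2*b) + (b + 1) * (-2*Real.exp (-2*b))) b :=
    (idd.add_const 1).mul e2
  have p3 := e3.const_mul (1/2)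
  have hg := ((p1.const_add 1).sub p2).sub p3
  have k1 : Real.exp (-b) = Real.exp (2*b) * Real.exp (-3*b) := by
    rw [← Real.exp_add]; ring_nf
  have k2 : Real.exp (-2*b) = Real.exp b * Real.exp (-3*b) := by
    rw [← Real.exp_add]; ring_nf
  unfold g
  refine hg.congr_deriv ?_
  rw [Ff, k1, k2]; ring

theorem stmt_9 : MonotoneOn g (Set.Ici (0:ℝ)) ∧
    ∀ b : ℝ, 0 ≤ b → 0 ≤ deriv g b := by
  have key : ∀ b : ℝ, 0 ≤ b → 0 ≤ deriv g b := by
    intro b hb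
    rw [(g_hasDeriv b).deriv]
    exact mul_nonneg (by positivity) (F_nonneg hb)
  refine ⟨?_, key⟩
  have hd : Differentiable ℝ g := fun x => (g_hasDeriv x).differentiableAt
  apply monotoneOn_of_deriv_nonneg (convex_Ici 0) hd.continuous.continuousOn
    (fun x _ => (hd x).differentiableWithinAt)
  intro x hx
  exact key x (by simpa using hx : (0:ℝ) < x).le
end

section
/- Define g(b) = 1 + ((1-2b)/2)·exp(-b) - (b+1)·exp(-2b) - (1/2)·exp(-3b) and α = inf{b ≥ 0 : g(b) ≥ 1/2}. Then 0.93261 ≤ α and α < 1, i.e., g(0.93261) < 1/2 ≤ g(1). -/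
noncomputable def α : ℝ := sInf {b : ℝ | 0 ≤ b ∧ 1/2 ≤ g b}

lemma exp_taylor10 (b : ℝ) (h0 : 0 ≤ b) (h1 : b ≤ 1) :
    |Real.exp (-b) - (1 - b + b^2/2 - b^3/6 + b^4/24 - b^5/120 + b^6/720 - b^7/5040
      + b^8/40320 - b^9/362880)| ≤ b^10 * (11 / 36288000) := by
  have h := Real.exp_bound (x := -b) (by rw [abs_neg, abs_of_nonneg h0]; exact h1)
    (n := 10) (by norm_num)
  rw [abs_neg, abs_of_nonneg h0] at h
  have hs : ∑ m ∈ Finset.range 10, (-b) ^ m / (m.factorial : ℝ)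
      = 1 - b + b^2/2 - b^3/6 + b^4/24 - b^5/120 + b^6/720 - b^7/5040
        + b^8/40320 - b^9/362880 := by
    simp [Finset.sum_range_succ, Nat.factorial]
    ring
  rw [hs] at h
  convert h using 2
  norm_num [Nat.factorial]

lemma exp_taylor4 (b : ℝ) (h0 : 0 ≤ b) (h1 : b ≤ 1) :
    1 - b + b^2/2 - b^3/6 - 5*b^4/96 ≤ Real.exp (-b) := by
  have h := Real.exp_bound (x := -b) (by rw [abs_neg, abs_of_nonneg h0]; exact h1)
    (n := 4) (by norm_num)
  rw [abs_neg, abs_of_nonneg h0] at h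
  have hs : ∑ m ∈ Finset.range 4, (-b) ^ m / (m.factorial : ℝ)
      = 1 - b + b^2/2 - b^3/6 := by
    simp [Finset.sum_range_succ, Nat.factorial]
    ring
  rw [hs] at h
  rw [abs_le] at h
  norm_num [Nat.factorial] at h
  linarith [h.1]

lemma g_eq (b : ℝ) : g b = 1 + ((1 - 2*b)/2) * Real.exp (-b)
    - (b + 1) * (Real.exp (-b))^2 - (1/2) * (Real.exp (-b))^3 := by
  have h2 : Real.exp (-2*b) = Real.exp (-b) ^ 2 := by
    rw [← Real.exp_nat_mul]; norm_num
  have h3 : Real.exp (-3*b) = Real.exp (-b) ^ 3 := by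
    rw [← Real.exp_nat_mul]; norm_num
  rw [g, h2, h3]

lemma g_deriv (b : ℝ) : HasDerivAt g
    (((2*b-3)/2) * Real.exp (-b) + (2*b+1) * Real.exp (-2*b) + (3/2) * Real.exp (-3*b)) b := by
  have eb : HasDerivAt (fun x : ℝ => Real.exp (-x)) (-Real.exp (-b)) b := by
    simpa [Function.comp_def] using (Real.hasDerivAt_exp (-b)).comp b (hasDerivAt_neg b)
  have e2 : HasDerivAt (fun x : ℝ => Real.exp (-2*x)) ((-2) * Real.exp (-2*b)) b := by
    have h := (Real.hasDerivAt_exp (-2*b)).comp b ((hasDerivAt_id b).const_mul (-2:ℝ))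
    simpa [Function.comp_def, mul_comm] using h
  have e3 : HasDerivAt (fun x : ℝ => Real.exp (-3*x)) ((-3) * Real.exp (-3*b)) b := by
    have h := (Real.hasDerivAt_exp (-3*b)).comp b ((hasDerivAt_id b).const_mul (-3:ℝ))
    simpa [Function.comp_def, mul_comm] using h
  have c1 : HasDerivAt (fun x : ℝ => (1 - 2*x)/2) (-(2*1)/2) b :=
    (((hasDerivAt_id b).const_mul 2).const_sub 1).div_const 2
  have c2 : HasDerivAt (fun x : ℝ => x + 1) 1 b := (hasDerivAt_id b).add_const 1
  have t1 := c1.mul eb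
  have t2 := c2.mul e2
  have t3 := e3.const_mul (1/2 : ℝ)
  have H := ((t1.const_add 1).sub t2).sub t3
  have hg : g = fun x : ℝ => 1 + ((1 - 2*x)/2) * Real.exp (-x)
      - (x + 1) * Real.exp (-2*x) - (1/2) * Real.exp (-3*x) := rfl
  rw [hg]
  refine H.congr_deriv ?_
  ring

lemma g_mono : StrictMonoOn g (Set.Icc (0:ℝ) 1) := by
  apply strictMonoOn_of_deriv_pos (convex_Icc 0 1)
  · have : Continuous g := by
      unfold g; continuity
    exact this.continuousOn
  · intro x hx
    rw [interior_Icc] at hx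
    obtain ⟨hx0, hx1⟩ := hx
    rw [(g_deriv x).deriv]
    have h2 : Real.exp (-2*x) = Real.exp (-x) ^ 2 := by
      rw [← Real.exp_nat_mul]; norm_num
    have h3 : Real.exp (-3*x) = Real.exp (-x) ^ 3 := by
      rw [← Real.exp_nat_mul]; norm_num
    rw [h2, h3]
    have hT := exp_taylor4 x hx0.le hx1.le
    set u := Real.exp (-x) with hu
    have hup : 0 < u := Real.exp_pos _
    have h21 : x^2 ≤ x := by nlinarith
    have h32 : x^3 ≤ x^2 := by nlinarith
    have h43 : x^4 ≤ x^3 := by nlinarith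
    have hTpos : 0 < 1 - x + x^2/2 - x^3/6 - 5*x^4/96 := by nlinarith [sq_nonneg (1-x)]
    have key : 0 < (2*x-3) + (4*x+2)*u + 3*u^2 := by
      nlinarith [mul_nonneg (sub_nonneg.2 hT) (by linarith : (0:ℝ) ≤ 4*x+2),
        mul_nonneg (sub_nonneg.2 hT) (by linarith : (0:ℝ) ≤ u + (1 - x + x^2/2 - x^3/6 - 5*x^4/96)),
        h21, h32, h43, sq_nonneg (x - 1/2), sq_nonneg (x*x - x), sq_nonneg x,
        mul_nonneg (mul_nonneg hx0.le hx0.le) hx0.le, sq_nonneg (x*x*x - x)]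
    nlinarith [mul_pos hup key]

lemma g_lt : g 0.93261 < 1/2 := by
  have ht := exp_taylor10 0.93261 (by norm_num) (by norm_num)
  rw [g_eq]
  set u := Real.exp (-(0.93261:ℝ)) with hu
  have hup : 0 < u := Real.exp_pos _
  have hl : (0.3935249:ℝ) ≤ u := by
    have h1 := (abs_le.1 ht).1
    norm_num at h1 ⊢
    linarith
  nlinarith [hl, hup, mul_nonneg (sub_nonneg.2 hl) hup.le, sq_nonneg (u - 0.3935249),
    mul_nonneg (mul_nonneg hup.le hup.le) hup.le]

lemma g_ge_one : 1/2 ≤ g 1 := by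
  rw [g_eq]
  have h1 : Real.exp (-(1:ℝ)) < 0.36788 := by
    rw [Real.exp_neg]
    rw [inv_lt_comm₀ (Real.exp_pos 1) (by norm_num)]
    calc (0.36788:ℝ)⁻¹ < 2.7182818283 := by norm_num
      _ < Real.exp 1 := Real.exp_one_gt_d9
  have hup : 0 < Real.exp (-(1:ℝ)) := Real.exp_pos _
  set u := Real.exp (-(1:ℝ))
  nlinarith [h1, hup, sq_nonneg u, mul_pos hup hup]

lemma g_ge_b0 : 1/2 ≤ g 0.95 := by
  have ht := exp_taylor10 0.95 (by norm_num) (by norm_num)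
  rw [g_eq]
  set u := Real.exp (-(0.95:ℝ)) with hu
  have hup : 0 < u := Real.exp_pos _
  have hl : u ≤ 0.38675 := by
    have h1 := (abs_le.1 ht).2
    norm_num at h1 ⊢
    linarith
  nlinarith [hl, hup, sq_nonneg u, mul_pos hup hup,
    mul_nonneg (sub_nonneg.2 hl) hup.le]

theorem stmt_18 : g 0.93261 < 1/2 ∧ 1/2 ≤ g 1 ∧ 0.93261 ≤ α ∧ α < 1 := by
  have hmem : (0.95:ℝ) ∈ {b : ℝ | 0 ≤ b ∧ 1/2 ≤ g b} := ⟨by norm_num, g_ge_b0⟩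
  have hbdd : BddBelow {b : ℝ | 0 ≤ b ∧ 1/2 ≤ g b} := ⟨0, fun x hx => hx.1⟩
  refine ⟨g_lt, g_ge_one, ?_, ?_⟩
  · apply le_csInf ⟨0.95, hmem⟩
    intro b hb
    by_contra h
    push_neg at h
    have hlt : g b < g 0.93261 :=
      g_mono ⟨hb.1, by linarith⟩ ⟨by norm_num, by norm_num⟩ h
    have := g_lt
    linarith [hb.2]
  · have : α ≤ 0.95 := csInf_le hbdd hmem
    linarith
end
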